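/- Let S ≤ M 8 be the span of the six vectors h₁ = X on qubits 1–4 (((1,0),(1,0),(1,0),(1,0),(0,0),(0,0),(0,0),(0,0))), h₂ = Z on qubits 1–4, h₃ = X on qubits 5–8, h₄ = Z on qubits 5–8, h₅ = ((0,0),(1,0),(1,1),(0,1),(0,0),(1,0),(1,1),(0,1)) (the stabilizer ·XYZ·XYZ), and h₆ = ((0,0),(0,1),(1,0),(1,1),(0,0),(0,1),(1,0),(1,1)) (the stabilizer ·ZXY·ZXY). Then S is isotropic, the F₂-dimension of S is 6, and the minimum Pauli weight over the set S^⊥ω \ S equals 3. (That is, this is an [[8,2,3]] stabilizer code.) -/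

import Mathlib

/-- Binary symplectic representation of `n`-qubit Pauli operators (up to phase). -/
abbrev M (n : ℕ) : Type := Fin n → ZMod 2 × ZMod 2

/-- The symplectic form: two Paulis commute iff it vanishes. -/
def symp {n : ℕ} (u v : M n) : ZMod 2 :=
  ∑ j, ((u j).1 * (v j).2 + (u j).2 * (v j).1)

/-- The (Pauli) weight: the number of qubits on which `v` acts nontrivially. -/
def wt {n : ℕ} (v : M n) : ℕ := (Finset.univ.filter fun j => v j ≠ 0).card

/-- The stabilizer `XXXX····` of the `[[8,2,3]]` code. -/
def h1 : M 8 := ![(1,0),(1,0),(1,0),(1,0),(0,0),(0,0),(0,0),(0,0)]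

/-- The stabilizer `ZZZZ····` of the `[[8,2,3]]` code. -/
def h2 : M 8 := ![(0,1),(0,1),(0,1),(0,1),(0,0),(0,0),(0,0),(0,0)]

/-- The stabilizer `····XXXX` of the `[[8,2,3]]` code. -/
def h3 : M 8 := ![(0,0),(0,0),(0,0),(0,0),(1,0),(1,0),(1,0),(1,0)]

/-- The stabilizer `····ZZZZ` of the `[[8,2,3]]` code. -/
def h4 : M 8 := ![(0,0),(0,0),(0,0),(0,0),(0,1),(0,1),(0,1),(0,1)]

/-- The stabilizer `·XYZ·XYZ` of the `[[8,2,3]]` code. -/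
def h5 : M 8 := ![(0,0),(1,0),(1,1),(0,1),(0,0),(1,0),(1,1),(0,1)]

/-- The stabilizer `·ZXY·ZXY` of the `[[8,2,3]]` code. -/
def h6 : M 8 := ![(0,0),(0,1),(1,0),(1,1),(0,0),(0,1),(1,0),(1,1)]

/-- The stabilizer span of the `[[8,2,3]]` code. -/
def S823 : Submodule (ZMod 2) (M 8) :=
  Submodule.span (ZMod 2) {h1, h2, h3, h4, h5, h6}


/-!
Isotropy and independence of the generators are finite checks, the latter through destabilizers
`t i` with `ω(t i, h j) = δ i j`. The weight-3 operator `·····ZYX` commutes with all of `S` but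
not with `·····XZY ∈ S^⊥ω`, so it lies in `S^⊥ω \ S`. Conversely, every vector of weight at most
2 is a sum of two single-qubit vectors, and a check over all of them shows that no nonzero one
commutes with the six generators.
-/

section SymplecticForm

variable {n : ℕ}

lemma symp_comm (u v : M n) : symp u v = symp v u :=
  Finset.sum_congr rfl fun _ _ => by ring

lemma symp_add_left (u v w : M n) : symp (u + v) w = symp u w + symp v w := by
  simp only [symp, ← Finset.sum_add_distrib, Pi.add_apply, Prod.fst_add, Prod.snd_add]
  exact Finset.sum_congr rfl fun _ _ => by ring

lemma symp_smul_left (c : ZMod 2) (u v : M n) : symp (c • u) v = c * symp u v := by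
  simp only [symp, Finset.mul_sum, Pi.smul_apply, Prod.smul_fst, Prod.smul_snd, smul_eq_mul]
  exact Finset.sum_congr rfl fun _ _ => by ring

def sympForm : M n →ₗ[ZMod 2] M n →ₗ[ZMod 2] ZMod 2 :=
  LinearMap.mk₂ (ZMod 2) symp symp_add_left symp_smul_left
    (fun u v w => by rw [symp_comm, symp_add_left, symp_comm v, symp_comm w])
    (fun c u v => by rw [symp_comm, symp_smul_left, symp_comm, smul_eq_mul])

lemma symp_eq_zero_of_mem_span {s : Set (M n)} {v u : M n} (hv : ∀ g ∈ s, symp v g = 0)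
    (hu : u ∈ Submodule.span (ZMod 2) s) : symp v u = 0 :=
  (Submodule.span_le (p := LinearMap.ker (sympForm v)) |>.2 hv) hu

lemma symp_span_eq_zero {s : Set (M n)} (hs : ∀ g ∈ s, ∀ g' ∈ s, symp g g' = 0) :
    ∀ u ∈ Submodule.span (ZMod 2) s, ∀ v ∈ Submodule.span (ZMod 2) s, symp u v = 0 := by
  refine fun u hu v hv => symp_eq_zero_of_mem_span (fun g hg => ?_) hv
  rw [symp_comm]
  exact symp_eq_zero_of_mem_span (hs g hg) hu

lemma notMem_span_of_symp_ne_zero {s : Set (M n)} {t w : M n} (ht : ∀ g ∈ s, symp t g = 0)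
    (hw : symp w t ≠ 0) : w ∉ Submodule.span (ZMod 2) s := fun hmem =>
  hw (by rw [symp_comm]; exact symp_eq_zero_of_mem_span ht hmem)

lemma linearIndependent_of_symp_eq_ite {ι : Type*} [Fintype ι] [DecidableEq ι] {g t : ι → M n}
    (hgt : ∀ i j, symp (t i) (g j) = if i = j then 1 else 0) : LinearIndependent (ZMod 2) g := by
  let pairing : M n →ₗ[ZMod 2] ι → ZMod 2 := LinearMap.pi fun i => sympForm (t i)
  refine LinearIndependent.of_comp pairing ?_
  have hcomp : pairing ∘ g = Pi.basisFun (ZMod 2) ι := by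
    ext j i
    simp [pairing, sympForm, hgt, Pi.single_apply]
  rw [hcomp]
  exact (Pi.basisFun (ZMod 2) ι).linearIndependent

end SymplecticForm

lemma exists_eq_single_add_single_of_wt_le_two {n : ℕ} [NeZero n] {v : M n} (hv : wt v ≤ 2) :
    ∃ (a b : Fin n) (p q : ZMod 2 × ZMod 2), v = Pi.single a p + Pi.single b q := by
  have hsum : ∑ j ∈ Finset.univ.filter (fun j => v j ≠ 0), Pi.single j (v j) = v := by
    simpa only [ne_eq, Pi.single_eq_zero_iff] using
      (Finset.sum_filter_ne_zero (f := fun j => Pi.single j (v j)) Finset.univ).trans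
        (Finset.univ_sum_single v)
  rw [wt] at hv
  interval_cases h : (Finset.univ.filter fun j => v j ≠ 0).card
  · rw [Finset.card_eq_zero] at h
    rw [h, Finset.sum_empty] at hsum
    exact ⟨0, 0, 0, 0, by simp [← hsum]⟩
  · obtain ⟨a, ha⟩ := Finset.card_eq_one.1 h
    rw [ha, Finset.sum_singleton] at hsum
    exact ⟨a, a, v a, 0, by simp [hsum]⟩
  · obtain ⟨a, b, hab, hs⟩ := Finset.card_eq_two.1 h
    rw [hs, Finset.sum_pair hab] at hsum
    exact ⟨a, b, v a, v b, hsum.symm⟩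

section Code823

def gens : Fin 6 → M 8 := ![h1, h2, h3, h4, h5, h6]

def destabilizers : Fin 6 → M 8 :=
  ![![(0,0),(0,0),(0,0),(0,1),(0,0),(0,0),(1,0),(1,0)],
    ![(0,0),(0,0),(0,0),(1,0),(0,0),(0,0),(1,1),(1,1)],
    ![(0,0),(0,0),(0,0),(0,0),(0,0),(0,0),(1,0),(1,1)],
    ![(0,0),(0,0),(0,0),(0,0),(0,0),(0,0),(1,1),(0,1)],
    ![(0,0),(0,0),(0,0),(0,0),(0,0),(0,0),(0,1),(0,1)],
    ![(0,0),(0,0),(0,0),(0,0),(0,0),(0,0),(1,0),(1,0)]]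

def logicalZYX : M 8 := ![(0,0),(0,0),(0,0),(0,0),(0,0),(0,1),(1,1),(1,0)]

def logicalXZY : M 8 := ![(0,0),(0,0),(0,0),(0,0),(0,0),(1,0),(0,1),(1,1)]

lemma S823_eq_span_range_gens : S823 = Submodule.span (ZMod 2) (Set.range gens) := by
  simp only [S823, gens, Matrix.range_cons, Matrix.range_empty, Set.union_empty,
    Set.singleton_union]

lemma symp_gens_gens (i j : Fin 6) : symp (gens i) (gens j) = 0 := by
  revert i j; decide

lemma symp_destabilizers_gens (i j : Fin 6) :
    symp (destabilizers i) (gens j) = if i = j then 1 else 0 := by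
  revert i j; decide

lemma symp_logicalZYX_gens (i : Fin 6) : symp logicalZYX (gens i) = 0 := by
  revert i; decide

lemma symp_logicalXZY_gens (i : Fin 6) : symp logicalXZY (gens i) = 0 := by
  revert i; decide

set_option maxRecDepth 100000 in
lemma single_add_single_eq_zero_of_symp_gens (a b : Fin 8) (p q : ZMod 2 × ZMod 2)
    (h : ∀ k, symp (Pi.single a p + Pi.single b q : M 8) (gens k) = 0) :
    (Pi.single a p + Pi.single b q : M 8) = 0 := by
  revert a b p q; decide

lemma gens_mem_S823 (i : Fin 6) : gens i ∈ S823 := by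
  rw [S823_eq_span_range_gens]
  exact Submodule.subset_span ⟨i, rfl⟩

lemma symp_S823_eq_zero_of_symp_gens {v : M 8} (hv : ∀ i, symp v (gens i) = 0) :
    ∀ s ∈ S823, symp v s = 0 := by
  rw [S823_eq_span_range_gens]
  exact fun s hs => symp_eq_zero_of_mem_span (Set.forall_mem_range.2 hv) hs

lemma logicalZYX_notMem_S823 : logicalZYX ∉ S823 := by
  rw [S823_eq_span_range_gens]
  exact notMem_span_of_symp_ne_zero (Set.forall_mem_range.2 symp_logicalXZY_gens) (by decide)

lemma three_le_wt_of_mem_perp_of_notMem {v : M 8} (hperp : ∀ s ∈ S823, symp v s = 0)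
    (hv : v ∉ S823) : 3 ≤ wt v := by
  by_contra! hwt
  obtain ⟨a, b, p, q, rfl⟩ := exists_eq_single_add_single_of_wt_le_two (Nat.le_of_lt_succ hwt)
  refine hv ?_
  rw [single_add_single_eq_zero_of_symp_gens a b p q fun k => hperp _ (gens_mem_S823 k)]
  exact zero_mem _

end Code823

theorem stmt12 :
    (∀ u ∈ S823, ∀ v ∈ S823, symp u v = 0) ∧
    Module.finrank (ZMod 2) S823 = 6 ∧
    sInf (wt '' {v : M 8 | (∀ s ∈ S823, symp v s = 0) ∧ v ∉ S823}) = 3 := by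
  refine ⟨?_, ?_, ?_⟩
  · rw [S823_eq_span_range_gens]
    exact symp_span_eq_zero <| Set.forall_mem_range.2 fun i =>
      Set.forall_mem_range.2 (symp_gens_gens i)
  · rw [S823_eq_span_range_gens,
      finrank_span_eq_card (linearIndependent_of_symp_eq_ite symp_destabilizers_gens),
      Fintype.card_fin]
  · have hwitness : 3 ∈ wt '' {v : M 8 | (∀ s ∈ S823, symp v s = 0) ∧ v ∉ S823} :=
      ⟨logicalZYX, ⟨symp_S823_eq_zero_of_symp_gens symp_logicalZYX_gens, logicalZYX_notMem_S823⟩,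
        by decide⟩
    refine le_antisymm (Nat.sInf_le hwitness) (le_csInf ⟨3, hwitness⟩ ?_)
    rintro _ ⟨v, ⟨hperp, hv⟩, rfl⟩
    exact three_le_wt_of_mem_perp_of_notMem hperp hv
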